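/- arXiv:1501.03466 — 4 statements merged into one kernel-verified Lean document; each statement's English description precedes it below -/
import Mathlib

section
/- A linear operator R : c₀ → c₀ is bounded if and only if there exists a doubly indexed family of reals (b i j), i, j ∈ ℕ, such that (1) for every i the row (b i j)_j is absolutely summable, (2) sup_i Σ_j |b i j| < ∞, (3) for every j the column (b i j)_i converges to 0, and (4) (R f) i = Σ_j b i j · f j for every f ∈ c₀ and every i ∈ ℕ. -/
/-!
Write `e j` for the unit sequences and `b i j` for the `i`-th coordinate of `R (e j)`. If `R` is
continuous, `‖R x‖ ≤ M ‖x‖`; evaluating the `i`-th coordinate of `R` on the finitely supported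
sign vector `∑_{j ∈ s} sign (b i j) e j`, of norm at most `1`, gives `∑_{j ∈ s} |b i j| ≤ M`.
The truncations `∑_{j < n} f j • e j` converge to `f` in `c₀` (this is where `f → 0` is used),
so continuity yields `(R f) i = ∑ j, b i j * f j`, and the columns tend to `0` because each
`R (e j)` lies in `c₀`. Conversely, the representation bounds `|(R f) i|` by
`(∑ j, |b i j|) ‖f‖ ≤ C ‖f‖`.
-/

open Filter Topology

noncomputable section

/-- The Banach space `ℓ∞` of bounded real sequences with the sup norm,
realized as bounded (continuous) functions on the discrete space `ℕ`. -/
abbrev ellInfty : Type := BoundedContinuousFunction ℕ ℝ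

/-- `c₀`, the subspace of `ℓ∞` of sequences converging to `0`. -/
def czero : Submodule ℝ ellInfty where
  carrier := {f | Tendsto (⇑f) atTop (𝓝 (0 : ℝ))}
  add_mem' := by intro a b ha hb; have h := ha.add hb; rw [add_zero] at h; exact h
  zero_mem' := by
    show Tendsto _ _ _
    simp only [BoundedContinuousFunction.coe_zero]
    exact tendsto_const_nhds
  smul_mem' := by intro c f hf; simpa using hf.const_mul c

lemma abs_tsum_mul_le {ι : Type*} {b f : ι → ℝ} {B : ℝ} (hb : Summable fun j => |b j|)
    (hf : ∀ j, |f j| ≤ B) : |∑' j, b j * f j| ≤ (∑' j, |b j|) * B :=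
  tsum_of_norm_bounded (hb.hasSum.mul_right B) fun j => by
    rw [Real.norm_eq_abs, abs_mul]
    exact mul_le_mul_of_nonneg_left (hf j) (abs_nonneg _)

namespace BoundedContinuousFunction

open scoped BoundedContinuousFunction

lemma norm_le_of_forall_eq_tsum_mul {α κ : Type*} [TopologicalSpace α]
    [Nonempty α] [TopologicalSpace κ] {b : α → κ → ℝ} {C : ℝ}
    (hb : ∀ i, Summable fun j => |b i j|) (hC : ∀ i, ∑' j, |b i j| ≤ C) {f : κ →ᵇ ℝ}
    {g : α →ᵇ ℝ} (hg : ∀ i, g i = ∑' j, b i j * f j) : ‖g‖ ≤ C * ‖f‖ := by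
  have hC0 : 0 ≤ C := (tsum_nonneg fun _ => abs_nonneg _).trans (hC (Classical.arbitrary α))
  refine (norm_le (by positivity)).2 fun i => ?_
  rw [Real.norm_eq_abs, hg]
  calc |∑' j, b i j * f j| ≤ (∑' j, |b i j|) * ‖f‖ := abs_tsum_mul_le (hb i) f.norm_coe_le_norm
    _ ≤ C * ‖f‖ := by gcongr; exact hC i

end BoundedContinuousFunction

namespace czero

open BoundedContinuousFunction

def single (j : ℕ) : czero :=
  ⟨ofNormedAddCommGroupDiscrete (Pi.single j 1) 1 fun k => by
      rcases eq_or_ne k j with rfl | hk <;> simp [*],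
    tendsto_const_nhds.congr' <| by
      filter_upwards [eventually_ne_atTop j] with k hk
      simp [hk]⟩

lemma coe_sum_smul_single_apply (s : Finset ℕ) (c : ℕ → ℝ) (k : ℕ) :
    ((∑ j ∈ s, c j • single j : czero) : ellInfty) k = if k ∈ s then c k else 0 := by
  simp [single, Pi.single_apply]

lemma norm_sum_smul_single_le {s : Finset ℕ} {c : ℕ → ℝ} {B : ℝ} (hB : 0 ≤ B)
    (hc : ∀ k ∈ s, |c k| ≤ B) : ‖∑ j ∈ s, c j • single j‖ ≤ B := by
  refine (norm_le (f := ((∑ j ∈ s, c j • single j : czero) : ellInfty)) hB).2 fun k => ?_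
  rw [coe_sum_smul_single_apply]
  split_ifs with hk
  exacts [hc k hk, by simpa using hB]

lemma tendsto_sum_range_smul_single (f : czero) :
    Tendsto (fun n => ∑ j ∈ Finset.range n, (f : ellInfty) j • single j) atTop (𝓝 f) := by
  refine Metric.tendsto_atTop.2 fun ε hε => ?_
  obtain ⟨N, hN⟩ := Metric.tendsto_atTop.1 f.2 (ε / 2) (half_pos hε)
  refine ⟨N, fun n hn => ?_⟩
  refine lt_of_le_of_lt ((dist_le (half_pos hε).le).2 fun k => ?_) (half_lt_self hε)
  simp only [coe_sum_smul_single_apply, Finset.mem_range]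
  split_ifs with hk
  · simpa using (half_pos hε).le
  · simpa using (hN k (hn.trans (not_lt.1 hk))).le

variable {φ : czero →ₗ[ℝ] ℝ} {M : ℝ}

lemma sum_abs_apply_single_le (hM : 0 ≤ M) (hφ : ∀ x, ‖φ x‖ ≤ M * ‖x‖) (s : Finset ℕ) :
    ∑ j ∈ s, |φ (single j)| ≤ M := by
  set σ : ℕ → ℝ := fun j => SignType.sign (φ (single j))
  have hσ : ∀ j, |σ j| ≤ 1 := fun j => by
    simp only [σ]; cases SignType.sign (φ (single j)) <;> simp
  calc ∑ j ∈ s, |φ (single j)| = φ (∑ j ∈ s, σ j • single j) := by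
        simp [σ, map_sum, sign_mul_self]
    _ ≤ M * ‖∑ j ∈ s, σ j • single j‖ := (le_abs_self _).trans (hφ _)
    _ ≤ M * 1 := by gcongr; exact norm_sum_smul_single_le zero_le_one fun k _ => hσ k
    _ = M := mul_one M

lemma summable_abs_apply_single (hM : 0 ≤ M) (hφ : ∀ x, ‖φ x‖ ≤ M * ‖x‖) :
    Summable fun j => |φ (single j)| :=
  summable_of_sum_le (fun _ => abs_nonneg _) (sum_abs_apply_single_le hM hφ)

lemma tsum_abs_apply_single_le (hM : 0 ≤ M) (hφ : ∀ x, ‖φ x‖ ≤ M * ‖x‖) :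
    ∑' j, |φ (single j)| ≤ M :=
  (summable_abs_apply_single hM hφ).tsum_le_of_sum_le (sum_abs_apply_single_le hM hφ)

lemma hasSum_apply_single_mul (hM : 0 ≤ M) (hφ : ∀ x, ‖φ x‖ ≤ M * ‖x‖) (f : czero) :
    HasSum (fun j => φ (single j) * (f : ellInfty) j) (φ f) := by
  have hsummable : Summable fun j => ‖φ (single j) * (f : ellInfty) j‖ := by
    refine .of_nonneg_of_le (fun _ => norm_nonneg _) (fun j => ?_)
      ((summable_abs_apply_single hM hφ).mul_right ‖f‖)
    rw [Real.norm_eq_abs, abs_mul]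
    exact mul_le_mul_of_nonneg_left ((f : ellInfty).norm_coe_le_norm j) (abs_nonneg _)
  rw [hasSum_iff_tendsto_nat_of_summable_norm hsummable]
  have hcont : Continuous φ := AddMonoidHomClass.continuous_of_bound φ M hφ
  convert (hcont.tendsto f).comp (tendsto_sum_range_smul_single f) using 2 with n
  simp [map_sum, mul_comm]

def rowFunctional (R : czero →ₗ[ℝ] czero) (i : ℕ) : czero →ₗ[ℝ] ℝ :=
  (evalCLM ℝ (α := ℕ) (β := ℝ) i).toLinearMap ∘ₗ czero.subtype ∘ₗ R

lemma norm_rowFunctional_apply_le {R : czero →ₗ[ℝ] czero} (hR : ∀ x, ‖R x‖ ≤ M * ‖x‖)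
    (i : ℕ) (x : czero) : ‖rowFunctional R i x‖ ≤ M * ‖x‖ :=
  ((R x : ellInfty).norm_coe_le_norm i).trans (hR x)

end czero

/-- A linear operator `R : c₀ → c₀` is bounded (continuous) iff it is given by a matrix
`(b i j)` with absolutely summable rows, uniformly bounded row `ℓ₁`-norms and columns
converging to `0`. -/
theorem statement0 (R : czero →ₗ[ℝ] czero) :
    Continuous R ↔
      ∃ b : ℕ → ℕ → ℝ,
        (∀ i, Summable fun j => |b i j|) ∧
        (∃ C : ℝ, ∀ i, (∑' j, |b i j|) ≤ C) ∧
        (∀ j, Tendsto (fun i => b i j) atTop (𝓝 (0 : ℝ))) ∧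
        (∀ f : czero, ∀ i : ℕ, (R f : ellInfty) i = ∑' j, b i j * (f : ellInfty) j) := by
  constructor
  · intro hR
    -- destructuring this term directly fails to synthesize its `SemilinearMapClass` instance
    have hbound := SemilinearMapClass.bound_of_continuous (𝕜 := ℝ) (σ₁₂ := RingHom.id ℝ) R hR
    obtain ⟨M, hM, hRM⟩ := hbound
    have hrow := czero.norm_rowFunctional_apply_le hRM
    exact ⟨fun i j => czero.rowFunctional R i (czero.single j),
      fun i => czero.summable_abs_apply_single hM.le (hrow i),
      ⟨M, fun i => czero.tsum_abs_apply_single_le hM.le (hrow i)⟩,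
      fun j => (R (czero.single j)).2,
      fun f i => (czero.hasSum_apply_single_mul hM.le (hrow i) f).tsum_eq.symm⟩
  · rintro ⟨b, hb, ⟨C, hC⟩, -, hRb⟩
    exact AddMonoidHomClass.continuous_of_bound R C fun f =>
      BoundedContinuousFunction.norm_le_of_forall_eq_tsum_mul hb hC (hRb f)
end
end

section
/- A bounded linear operator R : ℓ∞ → ℓ∞ is given by a c₀-matrix if and only if R maps c₀ into c₀ and the restriction of R to the closed unit ball of ℓ∞ is continuous from the topology of pointwise convergence on the ball to the topology of pointwise convergence on ℓ∞. -/
/-!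
If `R` is given by a `c₀`-matrix `b`, the columns `R eⱼ` lie in `c₀`, so `R` maps the finitely
supported sequences into `c₀`; these are norm-dense in `c₀` and `c₀` is closed, hence
`R c₀ ⊆ c₀`. On the unit ball the `i`-th coordinate `∑ⱼ b i j gⱼ` is dominated termwise by the
summable row `|b i ·|`, so it is pointwise continuous by the Weierstrass M-test.

Conversely put `b i j = (R eⱼ) i`. Testing `R` on the sign pattern of row `i` bounds its
partial `ℓ₁`-sums by `‖R‖`. For `g` in the unit ball its truncations stay in the ball and
converge to `g` pointwise, so pointwise continuity turns the finite-sum identity for the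
truncations into `(R g) i = ∑ⱼ b i j gⱼ`; homogeneity extends this to all of `ℓ∞`.
-/

open Filter Topology

noncomputable section

/-- `R : ℓ∞ → ℓ∞` is given by the `c₀`-matrix `b`: the rows of `b` are absolutely summable
with uniformly bounded `ℓ₁`-norms, the columns of `b` converge to `0`, and `R` acts by
matrix multiplication by `b`. -/
structure IsC0Matrix (R : ellInfty →L[ℝ] ellInfty) (b : ℕ → ℕ → ℝ) : Prop where
  rows_summable : ∀ i, Summable fun j => |b i j|
  rows_bounded : ∃ C : ℝ, ∀ i, (∑' j, |b i j|) ≤ C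
  cols_vanish : ∀ j, Tendsto (fun i => b i j) atTop (𝓝 (0 : ℝ))
  matrix_repr : ∀ f : ellInfty, ∀ i, R f i = ∑' j, b i j * f j

/-- The topology of pointwise convergence (product topology) on the closed unit ball
of `ℓ∞`, induced from `ℝ^ℕ`. -/
def ballPointwiseTopology : TopologicalSpace {g : ellInfty // ‖g‖ ≤ 1} :=
  TopologicalSpace.induced (fun g => (⇑g.1 : ℕ → ℝ)) Pi.topologicalSpace

open BoundedContinuousFunction

def ContinuousOnBallPointwise (R : ellInfty →L[ℝ] ellInfty) : Prop :=
  @Continuous _ _ ballPointwiseTopology Pi.topologicalSpace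
    (fun g : {g : ellInfty // ‖g‖ ≤ 1} => (⇑(R g.1) : ℕ → ℝ))

namespace ellInfty

def single (j : ℕ) : ellInfty :=
  ofNormedAddCommGroupDiscrete (Pi.single j 1) 1 fun k => by
    rcases eq_or_ne k j with rfl | h <;> simp [*]

lemma single_apply (j k : ℕ) : single j k = if k = j then 1 else 0 :=
  Pi.single_apply j 1 k

def trunc (c : ℕ → ℝ) (n : ℕ) : ellInfty := ∑ j ∈ Finset.range n, c j • single j

lemma trunc_apply (c : ℕ → ℝ) (n k : ℕ) : trunc c n k = if k < n then c k else 0 := by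
  simp [trunc, single_apply]

lemma norm_trunc_le {c : ℕ → ℝ} {M : ℝ} (hM : 0 ≤ M) (hc : ∀ j, |c j| ≤ M) (n : ℕ) :
    ‖trunc c n‖ ≤ M := by
  refine (norm_le hM).2 fun k => ?_
  rw [trunc_apply]
  split_ifs
  exacts [hc k, by simpa using hM]

lemma apply_trunc (R : ellInfty →L[ℝ] ellInfty) (c : ℕ → ℝ) (n i : ℕ) :
    R (trunc c n) i = ∑ j ∈ Finset.range n, R (single j) i * c j := by
  simp [trunc, map_sum, BoundedContinuousFunction.coe_sum, mul_comm]

lemma tendsto_trunc_apply (c : ℕ → ℝ) (k : ℕ) :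
    Tendsto (fun n => trunc c n k) atTop (𝓝 (c k)) :=
  tendsto_atTop_of_eventually_const (i₀ := k + 1) fun n hn => by
    rw [trunc_apply, if_pos (by omega)]

lemma tendsto_trunc_of_mem_czero {f : ellInfty} (hf : f ∈ czero) :
    Tendsto (fun n => trunc f n) atTop (𝓝 f) := by
  rw [tendsto_iff_norm_sub_tendsto_zero, Metric.tendsto_atTop]
  intro ε hε
  obtain ⟨N, hN⟩ := Metric.tendsto_atTop.1 hf (ε / 2) (half_pos hε)
  refine ⟨N, fun n hn => ?_⟩
  suffices ‖trunc f n - f‖ ≤ ε / 2 by simpa using this.trans_lt (half_lt_self hε)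
  refine (norm_le (half_pos hε).le).2 fun k => ?_
  rw [BoundedContinuousFunction.coe_sub, Pi.sub_apply, trunc_apply]
  split_ifs with hk
  · simpa using (half_pos hε).le
  · simpa using (hN k (by omega)).le

lemma single_mem_czero (j : ℕ) : single j ∈ czero :=
  tendsto_atTop_of_eventually_const (i₀ := j + 1) fun k hk => by
    rw [single_apply, if_neg (by omega)]

lemma isClosed_czero : IsClosed (czero : Set ellInfty) := by
  have hLip : ∀ k : ℕ, LipschitzWith 1 fun f : ellInfty => f k := fun k =>
    LipschitzWith.of_dist_le_mul fun f g => by simpa using dist_coe_le_dist k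
  exact (LipschitzWith.uniformEquicontinuous _ 1 hLip).equicontinuous.isClosed_setOfPred_tendsto
    continuous_const

lemma abs_mul_apply_le (a : ℝ) (f : ellInfty) (j : ℕ) : |a * f j| ≤ |a| * ‖f‖ := by
  rw [abs_mul]
  exact mul_le_mul_of_nonneg_left (norm_coe_le_norm f j) (abs_nonneg a)

lemma summable_mul_apply {a : ℕ → ℝ} (ha : Summable fun j => |a j|) (f : ellInfty) :
    Summable fun j => a j * f j :=
  .of_norm_bounded (ha.mul_right ‖f‖) fun j => abs_mul_apply_le (a j) f j

end ellInfty

open ellInfty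

namespace IsC0Matrix

variable {R : ellInfty →L[ℝ] ellInfty} {b : ℕ → ℕ → ℝ}

lemma apply_single (hb : IsC0Matrix R b) (i j : ℕ) : R (single j) i = b i j := by
  rw [hb.matrix_repr, tsum_eq_single j fun k hk => by simp [single_apply, hk]]
  simp [single_apply]

lemma mapsTo_czero (hb : IsC0Matrix R b) {f : ellInfty} (hf : f ∈ czero) : R f ∈ czero := by
  have hcol : ∀ j, R (single j) ∈ czero := fun j => by
    show Tendsto _ _ _
    rw [show ⇑(R (single j)) = fun i => b i j from funext (hb.apply_single · j)]
    exact hb.cols_vanish j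
  have htrunc : ∀ n, R (trunc f n) ∈ czero := fun n => by
    rw [trunc, map_sum]
    exact czero.sum_mem fun j _ => by rw [map_smul]; exact czero.smul_mem _ (hcol j)
  exact isClosed_czero.mem_of_tendsto
    ((R.continuous.tendsto f).comp (tendsto_trunc_of_mem_czero hf)) (Eventually.of_forall htrunc)

lemma continuousOnBallPointwise (hb : IsC0Matrix R b) : ContinuousOnBallPointwise R := by
  let := ballPointwiseTopology
  refine continuous_pi fun i => ?_
  simp only [hb.matrix_repr]
  refine continuous_tsum (fun j => continuous_const.mul
    ((continuous_apply j).comp continuous_induced_dom)) (hb.rows_summable i) fun j g => ?_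
  simpa using (abs_mul_apply_le (b i j) g.1 j).trans (mul_le_of_le_one_right (abs_nonneg _) g.2)

end IsC0Matrix

namespace ellInfty

variable (R : ellInfty →L[ℝ] ellInfty)

lemma sum_range_abs_apply_single_le (i n : ℕ) :
    ∑ j ∈ Finset.range n, |R (single j) i| ≤ ‖R‖ := by
  set s : ℕ → ℝ := fun j => SignType.sign (R (single j) i)
  have hs : ∀ j, |s j| ≤ 1 := fun j => by
    rcases lt_trichotomy (R (single j) i) 0 with h | h | h <;> simp [s, h]
  calc ∑ j ∈ Finset.range n, |R (single j) i| = R (trunc s n) i := by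
        simp [apply_trunc, s]
    _ ≤ ‖R (trunc s n)‖ := (le_abs_self _).trans (norm_coe_le_norm (R (trunc s n)) i)
    _ ≤ ‖R‖ * ‖trunc s n‖ := R.le_opNorm _
    _ ≤ ‖R‖ := mul_le_of_le_one_right (norm_nonneg R) (norm_trunc_le zero_le_one hs n)

lemma summable_abs_apply_single (i : ℕ) : Summable fun j => |R (single j) i| :=
  summable_of_sum_range_le (fun _ => abs_nonneg _) (sum_range_abs_apply_single_le R i)

variable {R}

lemma apply_eq_tsum_of_norm_le_one (hR : ContinuousOnBallPointwise R) {g : ellInfty}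
    (hg : ‖g‖ ≤ 1) (i : ℕ) : R g i = ∑' j, R (single j) i * g j := by
  let := ballPointwiseTopology
  have hball (n : ℕ) : ‖trunc g n‖ ≤ 1 :=
    norm_trunc_le zero_le_one (fun j => (norm_coe_le_norm g j).trans hg) n
  have htrunc : Tendsto (fun n => (⟨trunc g n, hball n⟩ : {g : ellInfty // ‖g‖ ≤ 1})) atTop
      (𝓝 ⟨g, hg⟩) := by
    change Tendsto _ atTop (@nhds _ ballPointwiseTopology _)
    rw [ballPointwiseTopology, nhds_induced, tendsto_comap_iff, tendsto_pi_nhds]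
    exact tendsto_trunc_apply g
  have hlim := tendsto_pi_nhds.1 ((hR.tendsto _).comp htrunc) i
  simp only [Function.comp_def, apply_trunc] at hlim
  exact tendsto_nhds_unique hlim
    (summable_mul_apply (summable_abs_apply_single R i) g).hasSum.tendsto_sum_nat

lemma apply_eq_tsum (hR : ContinuousOnBallPointwise R) (f : ellInfty) (i : ℕ) :
    R f i = ∑' j, R (single j) i * f j := by
  have hc : 0 < ‖f‖ + 1 := by positivity
  have hg : ‖(‖f‖ + 1)⁻¹ • f‖ ≤ 1 := by
    rw [norm_smul, norm_inv, Real.norm_of_nonneg hc.le, inv_mul_le_iff₀ hc]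
    linarith
  rw [← smul_inv_smul₀ hc.ne' f, map_smul, BoundedContinuousFunction.smul_apply,
    apply_eq_tsum_of_norm_le_one hR hg, smul_eq_mul, ← tsum_mul_left]
  simp [mul_left_comm]

lemma isC0Matrix_of_mapsTo_czero_of_continuous (h0 : ∀ f ∈ czero, R f ∈ czero)
    (hR : ContinuousOnBallPointwise R) :
    IsC0Matrix R fun i j => R (single j) i where
  rows_summable := summable_abs_apply_single R
  rows_bounded := ⟨‖R‖, fun i => (summable_abs_apply_single R i).tsum_le_of_sum_range_le
    (sum_range_abs_apply_single_le R i)⟩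
  cols_vanish j := h0 _ (single_mem_czero j)
  matrix_repr := apply_eq_tsum hR

end ellInfty

/-- A bounded operator `R : ℓ∞ → ℓ∞` is given by a `c₀`-matrix iff it preserves `c₀` and its
restriction to the closed unit ball is continuous from the topology of pointwise convergence
on the ball to the topology of pointwise convergence on `ℓ∞` (viewed inside `ℝ^ℕ`). -/
theorem statement4 (R : ellInfty →L[ℝ] ellInfty) :
    (∃ b : ℕ → ℕ → ℝ, IsC0Matrix R b) ↔
      ((∀ f ∈ czero, R f ∈ czero) ∧
        @Continuous _ _ ballPointwiseTopology Pi.topologicalSpace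
          (fun g : {g : ellInfty // ‖g‖ ≤ 1} => (⇑(R g.1) : ℕ → ℝ))) :=
  ⟨fun ⟨_, hb⟩ => ⟨fun _ => hb.mapsTo_czero, hb.continuousOnBallPointwise⟩,
    fun ⟨h0, hR⟩ => ⟨_, isC0Matrix_of_mapsTo_czero_of_continuous h0 hR⟩⟩
end
end

section
/- If a bounded linear operator T : ℓ∞/c₀ → ℓ∞/c₀ factors through ℓ∞, i.e., T = R₂ ∘ R₁ for some bounded linear operators R₁ : ℓ∞/c₀ → ℓ∞ and R₂ : ℓ∞ → ℓ∞/c₀, then T is locally null. -/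
open Filter Topology

noncomputable section

/-- The quotient Banach space `ℓ∞/c₀`; `czero.mkQ : ℓ∞ → ℓ∞/c₀` is the quotient map. -/
abbrev ellInftyModCzero : Type := ellInfty ⧸ czero

/-- A bounded operator `T` on `ℓ∞/c₀` is *locally null* if for every infinite `A ⊆ ℕ`
there is an infinite `A₁ ⊆ A` such that `T (Q f) = 0` for every `f ∈ ℓ∞` vanishing
outside of `A₁`. -/
def LocallyNull (T : ellInftyModCzero →L[ℝ] ellInftyModCzero) : Prop :=
  ∀ A : Set ℕ, A.Infinite → ∃ A₁ ⊆ A, A₁.Infinite ∧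
    ∀ f : ellInfty, (∀ n ∉ A₁, f n = 0) → T (czero.mkQ f) = 0

/-! Inside an infinite `A ⊆ ℕ` the branches of the binary tree give continuum many infinite,
pairwise almost disjoint sets. A bounded functional `φ` on `ℓ∞/c₀` is nonzero on classes supported
on only countably many of them: if `N` of them carry norm-one functions with `φ`-value `> ε`, these
functions overlap only on a finite set, so their sum has quotient norm `≤ 1` and `N ε ≤ ‖φ‖`.
The countably many functionals `x ↦ R₁ x k` thus all vanish on the classes supported on one branch. -/

def branch (r : ℕ → Bool) : Set (List Bool) :=
  Set.range fun n => List.ofFn fun i : Fin n => r i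

theorem branch_infinite (r : ℕ → Bool) : (branch r).Infinite :=
  Set.infinite_range_of_injective fun n m h => by simpa using congrArg List.length h

theorem branch_inter_branch_finite {r r' : ℕ → Bool} (h : r ≠ r') :
    (branch r ∩ branch r').Finite := by
  obtain ⟨k, hk⟩ := Function.ne_iff.mp h
  refine ((Set.finite_Iic k).image fun n => List.ofFn fun i : Fin n => r i).subset ?_
  rintro _ ⟨⟨n, rfl⟩, ⟨n', hn'⟩⟩
  obtain rfl : n' = n := by simpa using congrArg List.length hn'
  refine ⟨n', Set.mem_Iic.mpr (not_lt.mp fun hkn => hk ?_), rfl⟩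
  exact (congrFun (List.ofFn_inj.mp hn') ⟨k, hkn⟩).symm

theorem Set.Infinite.exists_almostDisjoint_family {α : Type*} {A : Set α} (hA : A.Infinite) :
    ∃ B : (ℕ → Bool) → Set α, (∀ r, B r ⊆ A) ∧ (∀ r, (B r).Infinite) ∧
      Pairwise fun r r' => (B r ∩ B r').Finite := by
  let e : List Bool → α := fun l => hA.natEmbedding A (Encodable.encode l)
  have he : Function.Injective e :=
    Subtype.val_injective.comp ((hA.natEmbedding A).injective.comp Encodable.encode_injective)
  refine ⟨fun r => e '' branch r, ?_, fun r => (branch_infinite r).image he.injOn, ?_⟩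
  · rintro r _ ⟨l, -, rfl⟩
    exact (hA.natEmbedding A _).2
  · intro r r' h
    rw [← Set.image_inter he]
    exact (branch_inter_branch_finite h).image e

open Classical in
instance : Uncountable (ℕ → Bool) :=
  ⟨fun ⟨g, hg⟩ => Function.cantor_injective (fun s : Set ℕ => g fun n => decide (n ∈ s))
    fun s t hst => Set.ext fun n => by simpa using congrFun (hg hst) n⟩

def supportedOn (S : Set ℕ) : Submodule ℝ ellInfty where
  carrier := {f | ∀ n ∉ S, f n = 0}
  add_mem' hf hg n hn := by simp [hf n hn, hg n hn]
  zero_mem' _ _ := rfl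
  smul_mem' c f hf n hn := by simp [hf n hn]

theorem norm_mkQ_le_of_eventually_norm_le (g : ellInfty) {c : ℝ} (hc : 0 ≤ c)
    (hg : ∀ᶠ n in cofinite, ‖g n‖ ≤ c) : ‖czero.mkQ g‖ ≤ c := by
  classical
  let F := {n | ¬‖g n‖ ≤ c}
  let h : ellInfty := .ofNormedAddCommGroup (fun n => if n ∈ F then 0 else g n)
    continuous_of_discreteTopology c fun n => by
      split_ifs with hn
      · simpa using hc
      · exact not_not.mp hn
  have hgh : g - h ∈ czero := by
    have hzero : ∀ᶠ n in atTop, (g - h) n = 0 := by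
      rw [← Nat.cofinite_eq_atTop]
      filter_upwards [hg] with n hn
      change g n - (if n ∈ F then 0 else g n) = 0
      rw [if_neg (show n ∉ F from not_not_intro hn), sub_self]
    exact tendsto_const_nhds.congr' (hzero.mono fun n hn => hn.symm)
  calc ‖czero.mkQ g‖ = ‖czero.mkQ h‖ := by
        rw [Submodule.mkQ_apply, Submodule.mkQ_apply, (Submodule.Quotient.eq czero).mpr hgh]
    _ ≤ ‖h‖ := Submodule.Quotient.norm_mk_le czero h
    _ ≤ c := BoundedContinuousFunction.norm_ofNormedAddCommGroup_le _ hc _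

section

variable {ι : Type*} {B : ι → Set ℕ}

theorem norm_mkQ_sum_le_one (s : Finset ι)
    (hB : (s : Set ι).Pairwise fun i j => (B i ∩ B j).Finite) {f : ι → ellInfty}
    (hf : ∀ i ∈ s, f i ∈ supportedOn (B i)) (hf₁ : ∀ i ∈ s, ‖f i‖ ≤ 1) :
    ‖czero.mkQ (∑ i ∈ s, f i)‖ ≤ 1 := by
  have hF : (⋃ p ∈ s.offDiag, B p.1 ∩ B p.2).Finite :=
    s.offDiag.finite_toSet.biUnion fun p hp => by
      obtain ⟨hp₁, hp₂, hne⟩ := Finset.mem_offDiag.mp hp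
      exact hB hp₁ hp₂ hne
  refine norm_mkQ_le_of_eventually_norm_le _ zero_le_one ?_
  filter_upwards [hF.eventually_cofinite_notMem] with n hn
  rw [BoundedContinuousFunction.sum_apply]
  by_cases hex : ∃ i ∈ s, n ∈ B i
  · obtain ⟨i, hi, hni⟩ := hex
    have hother : ∀ j ∈ s, j ≠ i → f j n = 0 := fun j hj hji => hf j hj n fun hnj =>
      hn <| Set.mem_biUnion (x := (j, i)) (Finset.mem_offDiag.mpr ⟨hj, hi, hji⟩) ⟨hnj, hni⟩
    rw [Finset.sum_eq_single_of_mem i hi hother]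
    exact ((f i).norm_coe_le_norm n).trans (hf₁ i hi)
  · push Not at hex
    rw [Finset.sum_eq_zero fun i hi => hf i hi n (hex i hi), norm_zero]
    exact zero_le_one

theorem finite_setOf_lt_map_mkQ (φ : ellInftyModCzero →L[ℝ] ℝ)
    (hB : Pairwise fun i j => (B i ∩ B j).Finite) {ε : ℝ} (hε : 0 < ε) :
    {i | ∃ f ∈ supportedOn (B i), ‖f‖ ≤ 1 ∧ ε < φ (czero.mkQ f)}.Finite := by
  -- the quotient topology on `ℓ∞/c₀` is not syntactically the one of its norm
  obtain ⟨C, hC₀, hC⟩ :=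
    ContinuousLinearMap.bound (E := ellInftyModCzero) (F := ℝ) (σ₁₂ := RingHom.id ℝ) φ
  by_contra hinf
  obtain ⟨s, hs, hcard⟩ := Set.Infinite.exists_subset_card_eq hinf (⌊C / ε⌋₊ + 1)
  have hs' : ∀ i ∈ s, ∃ f ∈ supportedOn (B i), ‖f‖ ≤ 1 ∧ ε < φ (czero.mkQ f) := fun i hi => hs hi
  choose! f hf hf₁ hfε using hs'
  have hlower : s.card * ε < φ (czero.mkQ (∑ i ∈ s, f i)) := by
    rw [map_sum, map_sum, ← nsmul_eq_mul, ← Finset.sum_const]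
    exact Finset.sum_lt_sum_of_nonempty (Finset.card_pos.mp (by omega)) hfε
  have hupper : φ (czero.mkQ (∑ i ∈ s, f i)) ≤ C :=
    calc φ (czero.mkQ (∑ i ∈ s, f i)) ≤ C * ‖czero.mkQ (∑ i ∈ s, f i)‖ :=
          (le_abs_self _).trans (hC _)
      _ ≤ C * 1 :=
          mul_le_mul_of_nonneg_left (norm_mkQ_sum_le_one s (hB.set_pairwise _) hf hf₁) hC₀.le
      _ = C := mul_one _
  have hN : C / ε < s.card := by
    rw [hcard]; push_cast; exact Nat.lt_floor_add_one _
  rw [div_lt_iff₀ hε] at hN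
  linarith

theorem countable_setOf_map_mkQ_ne_zero (φ : ellInftyModCzero →L[ℝ] ℝ)
    (hB : Pairwise fun i j => (B i ∩ B j).Finite) :
    {i | ∃ f ∈ supportedOn (B i), φ (czero.mkQ f) ≠ 0}.Countable := by
  refine .mono ?_ (Set.countable_iUnion fun m : ℕ =>
    (finite_setOf_lt_map_mkQ φ hB (Nat.one_div_pos_of_nat (n := m))).countable)
  rintro i ⟨f, hf, hne⟩
  set a := φ (czero.mkQ f)
  set g := a • f
  have hg : 0 < φ (czero.mkQ g) := by
    simpa [g, a, map_smul] using mul_self_pos.mpr hne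
  have hg₀ : g ≠ 0 := by rintro hg₀; simp [hg₀] at hg
  have hnorm : ‖‖g‖⁻¹ • g‖ = 1 := by
    rw [norm_smul, norm_inv, norm_norm, inv_mul_cancel₀ (norm_ne_zero_iff.mpr hg₀)]
  have hpos : 0 < φ (czero.mkQ (‖g‖⁻¹ • g)) := by
    rw [map_smul, map_smul, smul_eq_mul]
    exact mul_pos (inv_pos.mpr (norm_pos_iff.mpr hg₀)) hg
  obtain ⟨m, hm⟩ := exists_nat_one_div_lt hpos
  exact Set.mem_iUnion.mpr ⟨m, _, (supportedOn _).smul_mem _ ((supportedOn _).smul_mem _ hf),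
    hnorm.le, hm⟩

theorem exists_forall_supportedOn_map_mkQ_eq_zero [Uncountable ι]
    (R : ellInftyModCzero →L[ℝ] ellInfty) (hB : Pairwise fun i j => (B i ∩ B j).Finite) :
    ∃ i, ∀ f ∈ supportedOn (B i), R (czero.mkQ f) = 0 := by
  let φ (k : ℕ) : ellInftyModCzero →L[ℝ] ℝ := (BoundedContinuousFunction.evalCLM ℝ k).comp R
  have hbad : (⋃ k, {i | ∃ f ∈ supportedOn (B i), φ k (czero.mkQ f) ≠ 0}).Countable :=
    Set.countable_iUnion fun k => countable_setOf_map_mkQ_ne_zero (φ k) hB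
  obtain ⟨i, hi⟩ : ∃ i, i ∉ ⋃ k, {i | ∃ f ∈ supportedOn (B i), φ k (czero.mkQ f) ≠ 0} := by
    by_contra! h
    exact Set.not_countable_univ (hbad.mono fun i _ => h i)
  refine ⟨i, fun f hf => ?_⟩
  ext k
  by_contra hk
  exact hi (Set.mem_iUnion.mpr ⟨k, f, hf, hk⟩)

end

/-- Every bounded operator on `ℓ∞/c₀` which factors through `ℓ∞` is locally null. -/
theorem statement7 (T : ellInftyModCzero →L[ℝ] ellInftyModCzero)
    (h : ∃ (R₁ : ellInftyModCzero →L[ℝ] ellInfty) (R₂ : ellInfty →L[ℝ] ellInftyModCzero),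
      T = R₂.comp R₁) :
    LocallyNull T := by
  obtain ⟨R₁, R₂, rfl⟩ := h
  intro A hA
  obtain ⟨B, hBA, hBinf, hB⟩ := hA.exists_almostDisjoint_family
  obtain ⟨r, hr⟩ := exists_forall_supportedOn_map_mkQ_eq_zero R₁ hB
  refine ⟨B r, hBA r, hBinf r, fun f hf => ?_⟩
  rw [ContinuousLinearMap.comp_apply, hr f hf, map_zero]
end
end

section
/- Let T : C(ℕ*) → C(ℕ*) be a bounded linear operator and let B ⊆ ℕ be infinite. Then there exist an infinite B₁ ⊆ B and a real number s ≥ 0 such that for every y ∈ B₁*, the operator norm of the continuous linear functional C(ℕ*) → ℝ given by f ↦ (T f)(y) equals s. -/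
open Filter Topology

noncomputable section

/-- The underlying set of the Stone–Čech remainder `ℕ* = βℕ \ ℕ`: the nonprincipal
ultrafilters in the space `Ultrafilter ℕ`, which is the Stone–Čech compactification of the
discrete space `ℕ` (with `pure : ℕ → Ultrafilter ℕ` the canonical embedding). -/
def nstarSet : Set (Ultrafilter ℕ) := {u | ∀ n : ℕ, u ≠ pure n}

/-- The Stone–Čech remainder `ℕ* = βℕ \ ℕ` as a topological space. -/
abbrev NStar : Type := ↥nstarSet

lemma isOpen_principal_ultrafilters :
    IsOpen {u : Ultrafilter ℕ | ∃ n : ℕ, u = pure n} := by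
  have heq : {u : Ultrafilter ℕ | ∃ n : ℕ, u = pure n} =
      ⋃ n : ℕ, {u : Ultrafilter ℕ | ({n} : Set ℕ) ∈ u} := by
    ext u
    simp only [Set.mem_setOf_eq, Set.mem_iUnion]
    constructor
    · rintro ⟨n, rfl⟩
      exact ⟨n, by simp⟩
    · rintro ⟨n, hn⟩
      obtain ⟨x, hx, hux⟩ := Ultrafilter.eq_pure_of_finite_mem (Set.finite_singleton n) hn
      exact ⟨x, hux⟩
  rw [heq]
  exact isOpen_iUnion fun n => ultrafilter_isOpen_basic _
lemma isClosed_nstarSet : IsClosed nstarSet := by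
  have : nstarSet = {u : Ultrafilter ℕ | ∃ n : ℕ, u = pure n}ᶜ := by
    ext u
    simp [nstarSet, not_exists]
  rw [this]
  exact isOpen_principal_ultrafilters.isClosed_compl

instance : CompactSpace NStar :=
  isCompact_iff_compactSpace.mp (isClosed_nstarSet.isCompact)


/-- For an infinite `B₁ ⊆ ℕ`, the set `B₁*` of points of `ℕ*` lying in the closure (in `βℕ`,
i.e. in `Ultrafilter ℕ`) of the image of `B₁`. -/
def starSet (B₁ : Set ℕ) : Set NStar :=
  {y : NStar | (y : Ultrafilter ℕ) ∈ closure ((pure : ℕ → Ultrafilter ℕ) '' B₁)}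

/-!
The function `φ y = ‖f ↦ (T f) y‖` is lower semicontinuous on `ℕ*` and bounded by `‖T‖`. For any
such `φ`, every infinite `A` contains an infinite `A'` on whose remainder `A'*` the function `φ`
oscillates by at most a given `ε`. Iterating with `ε = 1/(n+1)` gives a decreasing sequence of
infinite sets; an infinite pseudo-intersection `B₁` of it has `B₁*` inside all their remainders,
so `φ` is constant on `B₁*`.
-/

namespace NStar

lemma mem_nstarSet_iff_le_cofinite {u : Ultrafilter ℕ} :
    u ∈ nstarSet ↔ (u : Filter ℕ) ≤ cofinite := by
  refine ⟨fun hu => (u.le_cofinite_or_eq_pure).resolve_right fun ⟨n, hn⟩ => hu n hn, ?_⟩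
  rintro hu n rfl
  simpa using hu (Set.finite_singleton n).compl_mem_cofinite

lemma le_cofinite (y : NStar) : (y : Filter ℕ) ≤ cofinite :=
  mem_nstarSet_iff_le_cofinite.mp y.2

lemma infinite_of_mem {X : Set ℕ} {y : NStar} (hX : X ∈ (y : Ultrafilter ℕ)) : X.Infinite :=
  fun hfin => compl_notMem hX (y.le_cofinite hfin.compl_mem_cofinite)

lemma mem_starSet {X : Set ℕ} {y : NStar} : y ∈ starSet X ↔ X ∈ (y : Ultrafilter ℕ) := by
  refine ⟨fun hy => ?_, fun hX => ?_⟩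
  · refine (ultrafilter_isClosed_basic X).closure_subset_iff.mpr ?_ hy
    rintro _ ⟨n, hn, rfl⟩
    exact hn
  · refine ultrafilterBasis_is_basis.mem_closure_iff.mpr ?_
    rintro _ ⟨C, rfl⟩ hC
    obtain ⟨n, hnC, hnX⟩ := Ultrafilter.nonempty_of_mem (inter_mem hC hX)
    exact ⟨pure n, hnC, n, hnX, rfl⟩

lemma starSet_subset_of_diff_finite {X Y : Set ℕ} (h : (X \ Y).Finite) :
    starSet X ⊆ starSet Y := by
  intro y hy
  have hXY : X \ (X \ Y) ∈ (y : Ultrafilter ℕ) :=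
    sdiff_mem (mem_starSet.mp hy) (y.le_cofinite h.compl_mem_cofinite)
  exact mem_starSet.mpr (mem_of_superset hXY fun n hn => not_not.mp fun hnY => hn.2 ⟨hn.1, hnY⟩)

lemma starSet_mono {X Y : Set ℕ} (h : X ⊆ Y) : starSet X ⊆ starSet Y :=
  starSet_subset_of_diff_finite (by simp [Set.sdiff_eq_empty.mpr h])

lemma starSet_nonempty {X : Set ℕ} (hX : X.Infinite) : (starSet X).Nonempty := by
  have := hX.cofinite_inf_principal_neBot
  obtain ⟨u, hu⟩ := Ultrafilter.exists_le (cofinite ⊓ 𝓟 X)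
  exact ⟨⟨u, mem_nstarSet_iff_le_cofinite.mpr (hu.trans inf_le_left)⟩,
    mem_starSet.mpr (hu.trans inf_le_right (mem_principal_self X))⟩

lemma exists_starSet_subset_of_mem_nhds {U : Set NStar} {y : NStar} (hU : U ∈ 𝓝 y) :
    ∃ C ∈ (y : Ultrafilter ℕ), starSet C ⊆ U := by
  obtain ⟨V, hV, hVU⟩ := (mem_nhds_subtype _ _ _).mp hU
  obtain ⟨_, ⟨C, rfl⟩, hyC, hCV⟩ := ultrafilterBasis_is_basis.mem_nhds_iff.mp hV
  exact ⟨C, hyC, fun z hz => hVU (hCV (mem_starSet.mp hz))⟩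

end NStar

lemma exists_infinite_pseudointersection {A : ℕ → Set ℕ} (hA : Antitone A)
    (hinf : ∀ n, (A n).Infinite) : ∃ B ⊆ A 0, B.Infinite ∧ ∀ n, (B \ A n).Finite := by
  choose b hbA hbgt using fun n => (hinf n).exists_gt n
  refine ⟨Set.range b, Set.range_subset_iff.mpr fun n => hA (Nat.zero_le n) (hbA n), ?_, ?_⟩
  · exact Set.infinite_of_not_bddAbove fun ⟨M, hM⟩ => (hbgt M).not_ge (hM ⟨M, rfl⟩)
  · intro n
    refine ((Set.finite_Iio n).image b).subset ?_
    rintro _ ⟨⟨k, rfl⟩, hk⟩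
    exact ⟨k, not_le.mp fun hnk => hk (hA hnk (hbA k)), rfl⟩

open NStar

section LowerSemicontinuous

variable {φ : NStar → ℝ} (hφ : LowerSemicontinuous φ) (hφ_bdd : BddAbove (Set.range φ))
include hφ hφ_bdd

/-- Choose `A' ⊆ A` whose infimum of `φ` over `A'*` is within `ε` of the best possible; a point
of `A'*` where `φ` exceeds that infimum by more than `ε` would, by lower semicontinuity, have a
clopen neighbourhood `(C ∩ A')*` on which the infimum is larger still. -/
lemma exists_infinite_subset_oscillation_le {A : Set ℕ} (hA : A.Infinite) {ε : ℝ} (hε : 0 < ε) :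
    ∃ A' ⊆ A, A'.Infinite ∧ ∀ y ∈ starSet A', ∀ z ∈ starSet A', φ y ≤ φ z + ε := by
  have hφ_bdd_below : BddBelow (Set.range φ) := by
    simpa using (hφ.lowerSemicontinuousOn Set.univ).bddBelow_of_isCompact isCompact_univ
  let m : Set ℕ → ℝ := fun X => sInf (φ '' starSet X)
  have hm_le : ∀ {X z}, z ∈ starSet X → m X ≤ φ z := fun hz =>
    csInf_le (hφ_bdd_below.mono (Set.image_subset_range _ _)) ⟨_, hz, rfl⟩
  let S : Set ℝ := m '' {X | X ⊆ A ∧ X.Infinite}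
  have hS : BddAbove S := by
    obtain ⟨M, hM⟩ := hφ_bdd
    refine ⟨M, ?_⟩
    rintro _ ⟨X, ⟨-, hX⟩, rfl⟩
    obtain ⟨z, hz⟩ := starSet_nonempty hX
    exact (hm_le hz).trans (hM ⟨z, rfl⟩)
  have hS_ne : S.Nonempty := ⟨m A, A, ⟨subset_rfl, hA⟩, rfl⟩
  obtain ⟨_, ⟨A', ⟨hA'A, hA'⟩, rfl⟩, hA'_near⟩ :=
    exists_lt_of_lt_csSup hS_ne (sub_lt_self (sSup S) hε)
  refine ⟨A', hA'A, hA', fun y hy z hz => le_of_not_gt fun hzy => ?_⟩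
  have hy_big : m A' + ε < φ y := by linarith [hm_le hz]
  obtain ⟨C, hCy, hC⟩ := exists_starSet_subset_of_mem_nhds (hφ y _ hy_big)
  have hCA' : C ∩ A' ∈ (y : Ultrafilter ℕ) := inter_mem hCy (mem_starSet.mp hy)
  have hm_CA' : m A' + ε ≤ m (C ∩ A') := by
    refine le_csInf ((starSet_nonempty (infinite_of_mem hCA')).image φ) ?_
    rintro _ ⟨w, hw, rfl⟩
    exact (hC (starSet_mono Set.inter_subset_left hw)).le
  have : m (C ∩ A') ≤ sSup S :=
    le_csSup hS ⟨C ∩ A', ⟨Set.inter_subset_right.trans hA'A, infinite_of_mem hCA'⟩, rfl⟩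
  linarith

theorem exists_infinite_subset_forall_starSet_eq {B : Set ℕ} (hB : B.Infinite) :
    ∃ B₁ ⊆ B, B₁.Infinite ∧ ∃ s, ∀ y ∈ starSet B₁, φ y = s := by
  choose F hF_sub hF_inf hF_osc using fun (A : {A : Set ℕ // A.Infinite}) (n : ℕ) =>
    exists_infinite_subset_oscillation_le hφ hφ_bdd A.2 (Nat.one_div_pos_of_nat (n := n))
  let A : ℕ → {A : Set ℕ // A.Infinite} := fun n =>
    Nat.rec ⟨B, hB⟩ (fun n X => ⟨F X n, hF_inf X n⟩) n
  obtain ⟨B₁, hB₁B, hB₁, hB₁_fin⟩ := exists_infinite_pseudointersection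
    (antitone_nat_of_succ_le fun n => hF_sub (A n) n) fun n => (A n).2
  have hosc (n : ℕ) : ∀ y ∈ starSet B₁, ∀ z ∈ starSet B₁, φ y ≤ φ z + 1 / (n + 1) :=
    fun y hy z hz => hF_osc (A n) n y (starSet_subset_of_diff_finite (hB₁_fin (n + 1)) hy)
      z (starSet_subset_of_diff_finite (hB₁_fin (n + 1)) hz)
  have hle : ∀ y ∈ starSet B₁, ∀ z ∈ starSet B₁, φ y ≤ φ z := fun y hy z hz =>
    le_of_forall_pos_le_add fun ε hε => by
      obtain ⟨n, hn⟩ := exists_nat_one_div_lt hε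
      linarith [hosc n y hy z hz]
  obtain ⟨y₀, hy₀⟩ := starSet_nonempty hB₁
  exact ⟨B₁, hB₁B, hB₁, φ y₀, fun y hy => le_antisymm (hle y hy y₀ hy₀) (hle y₀ hy₀ y hy)⟩

end LowerSemicontinuous

section EvalComp

variable {𝕜 E X F : Type*} [DenselyNormedField 𝕜] [NormedAddCommGroup E] [NormedSpace 𝕜 E]
  [TopologicalSpace X] [NormedAddCommGroup F] [NormedSpace 𝕜 F]

lemma lowerSemicontinuous_norm_evalCLM_comp (T : E →L[𝕜] C(X, F)) :
    LowerSemicontinuous fun x => ‖(ContinuousMap.evalCLM 𝕜 x).comp T‖ := by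
  intro x r hr
  obtain ⟨f, hf, hrf⟩ := ContinuousLinearMap.exists_lt_apply_of_lt_opNorm _ hr
  filter_upwards [(T f).continuous.norm.continuousAt.eventually (lt_mem_nhds hrf)] with y hy
  calc r < ‖(T f) y‖ := hy
    _ ≤ ‖(ContinuousMap.evalCLM 𝕜 y).comp T‖ * 1 :=
      ((ContinuousMap.evalCLM 𝕜 y).comp T).le_opNorm_of_le hf.le
    _ = _ := mul_one _

lemma norm_evalCLM_comp_le [CompactSpace X] (T : E →L[𝕜] C(X, F)) (x : X) :
    ‖(ContinuousMap.evalCLM 𝕜 x).comp T‖ ≤ ‖T‖ :=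
  ContinuousLinearMap.opNorm_le_bound _ (norm_nonneg T) fun f =>
    ((T f).norm_coe_le_norm x).trans (T.le_opNorm f)

end EvalComp

/-- For every bounded operator `T` on `C(ℕ*)` and every infinite `B ⊆ ℕ` there are an
infinite `B₁ ⊆ B` and `s ≥ 0` such that for every `y ∈ B₁*` the norm of the functional
`f ↦ (T f)(y)` equals `s`. -/
theorem statement18 (T : C(NStar, ℝ) →L[ℝ] C(NStar, ℝ)) (B : Set ℕ) (hB : B.Infinite) :
    ∃ B₁ ⊆ B, B₁.Infinite ∧ ∃ s : ℝ, 0 ≤ s ∧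
      ∀ y ∈ starSet B₁, ‖(ContinuousMap.evalCLM ℝ y).comp T‖ = s := by
  obtain ⟨B₁, hB₁B, hB₁, s, hs⟩ := exists_infinite_subset_forall_starSet_eq
    (lowerSemicontinuous_norm_evalCLM_comp T)
    ⟨‖T‖, Set.forall_mem_range.mpr (norm_evalCLM_comp_le T)⟩ hB
  obtain ⟨y, hy⟩ := starSet_nonempty hB₁
  exact ⟨B₁, hB₁B, hB₁, s, hs y hy ▸ norm_nonneg _, hs⟩
end
end
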